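/- arXiv:2506.24114 — 4 statements merged into one kernel-verified Lean document; each statement's English description precedes it below -/
import Mathlib

section
/- Let H = (V, E) be a hypergraph in which every hyperedge has at least 2 vertices. Let I ⊆ V be a nonempty independent set and let J = {Y ⊆ V : Y ∪ {x} ∈ E for some x ∈ I}. If |I| ≥ |J| + 1, then there exist a nonempty set I' ⊆ I and a set J' ⊆ J such that (I', J') is a strict HS crown decomposition of H; that is, J' = {Y ⊆ V : Y ∪ {x} ∈ E for some x ∈ I'}, there is an injective map M : J' → I' with {M(Y)} ∪ Y ∈ E for every Y ∈ J', and |I'| ≥ |J'| + 1. -/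
private lemma crown_aux {α : Type*} [DecidableEq α] (n : ℕ)
    (V : Finset α) (E : Finset (Finset α))
    (hEV : ∀ e ∈ E, e ⊆ V) (hE2 : ∀ e ∈ E, 2 ≤ e.card) :
    ∀ (I : Finset α), I.card ≤ n → I ⊆ V → I.Nonempty →
    (∀ e ∈ E, ∀ u ∈ e, ∀ v ∈ e, u ∈ I → v ∈ I → u = v) →
    ∀ (J : Finset (Finset α)),
    (∀ Y : Finset α, Y ∈ J ↔ Y ⊆ V ∧ ∃ x ∈ I, Y ∪ {x} ∈ E) →
    J.card + 1 ≤ I.card →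
    ∃ (I' : Finset α) (J' : Finset (Finset α)),
      I' ⊆ I ∧ I'.Nonempty ∧ J' ⊆ J ∧
      (∀ e ∈ E, ∀ u ∈ e, ∀ v ∈ e, u ∈ I' → v ∈ I' → u = v) ∧
      (∀ Y : Finset α, Y ∈ J' ↔ Y ⊆ V ∧ ∃ x ∈ I', Y ∪ {x} ∈ E) ∧
      (∃ M : Finset α → α, Set.InjOn M ↑J' ∧ ∀ Y ∈ J', M Y ∈ I' ∧ {M Y} ∪ Y ∈ E) ∧
      J'.card + 1 ≤ I'.card := by
  induction n with
  | zero =>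
    intro I hn _ hIne _ _ _ _
    have := Finset.card_pos.mpr hIne
    omega
  | succ n ih =>
    intro I hn hIV hIne hInd J hJ hcard
    classical
    set N : Finset α → Finset α := fun Y => I.filter (fun x => Y ∪ {x} ∈ E) with hN
    by_cases hHall : ∀ s : Finset {Y // Y ∈ J}, s.card ≤ (s.biUnion fun Y => N Y.1).card
    · -- Hall's condition holds: take I' = I, J' = J
      obtain ⟨f, hfinj, hf⟩ :=
        (Finset.all_card_le_biUnion_card_iff_exists_injective
          (fun Y : {Y // Y ∈ J} => N Y.1)).mp hHall
      refine ⟨I, J, subset_rfl, hIne, subset_rfl, hInd, hJ, ?_, hcard⟩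
      refine ⟨fun Y => if h : Y ∈ J then f ⟨Y, h⟩ else hIne.choose, ?_, ?_⟩
      · intro Y hY Z hZ hYZ
        simp only [Finset.mem_coe] at hY hZ
        simp only [dif_pos hY, dif_pos hZ] at hYZ
        exact Subtype.ext_iff.mp (hfinj hYZ)
      · intro Y hY
        simp only [dif_pos hY]
        have := hf ⟨Y, hY⟩
        simp only [hN, Finset.mem_filter] at this
        exact ⟨this.1, by rw [Finset.union_comm]; exact this.2⟩
    · -- Hall fails: shrink I
      push_neg at hHall
      obtain ⟨s, hs⟩ := hHall
      have hsne : s.Nonempty := by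
        rcases s.eq_empty_or_nonempty with rfl | h
        · simp at hs
        · exact h
      set NS : Finset α := s.biUnion (fun Y => N Y.1) with hNS
      have hNSsub : NS ⊆ I := by
        intro x hx
        simp only [hNS, Finset.mem_biUnion] at hx
        obtain ⟨Y, _, hY⟩ := hx
        exact (Finset.mem_filter.mp hY).1
      set S : Finset (Finset α) := s.image Subtype.val with hS
      have hScard : S.card = s.card := Finset.card_image_of_injective _ Subtype.val_injective
      have hSsub : S ⊆ J := by
        intro Y hY
        simp only [hS, Finset.mem_image] at hY
        obtain ⟨Z, _, rfl⟩ := hY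
        exact Z.2
      have hNSne : NS.Nonempty := by
        obtain ⟨Y, hY⟩ := hsne
        obtain ⟨_, x, hxI, hxE⟩ := (hJ Y.1).mp Y.2
        exact ⟨x, Finset.mem_biUnion.mpr ⟨Y, hY, Finset.mem_filter.mpr ⟨hxI, hxE⟩⟩⟩
      set I'' : Finset α := I \ NS with hI''
      set J'' : Finset (Finset α) := J.filter (fun Y => ∃ x ∈ I'', Y ∪ {x} ∈ E) with hJ''
      have hI''card : I''.card = I.card - NS.card := Finset.card_sdiff_of_subset hNSsub
      have hJ''sub : J'' ⊆ J \ S := by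
        intro Y hY
        simp only [hJ'', Finset.mem_filter] at hY
        obtain ⟨hYJ, x, hxI'', hxE⟩ := hY
        rw [Finset.mem_sdiff]
        refine ⟨hYJ, fun hYS => ?_⟩
        simp only [hS, Finset.mem_image] at hYS
        obtain ⟨Z, hZs, hZY⟩ := hYS
        have : x ∈ NS := Finset.mem_biUnion.mpr
          ⟨Z, hZs, Finset.mem_filter.mpr ⟨(Finset.mem_sdiff.mp hxI'').1, hZY ▸ hxE⟩⟩
        exact (Finset.mem_sdiff.mp hxI'').2 this
      have hJ''card : J''.card + S.card ≤ J.card := by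
        have h1 : J''.card ≤ (J \ S).card := Finset.card_le_card hJ''sub
        have h2 : (J \ S).card = J.card - S.card := Finset.card_sdiff_of_subset hSsub
        have h3 : S.card ≤ J.card := Finset.card_le_card hSsub
        omega
      have hkey : J''.card + 2 ≤ I''.card := by
        have h4 : NS.card ≤ I.card := Finset.card_le_card hNSsub
        omega
      have hI''ne : I''.Nonempty := Finset.card_pos.mp (by omega)
      have hI''sub : I'' ⊆ I := Finset.sdiff_subset
      have hI''lt : I''.card ≤ n := by
        have := Finset.card_pos.mpr hNSne
        omega
      have hJ''prop : ∀ Y : Finset α, Y ∈ J'' ↔ Y ⊆ V ∧ ∃ x ∈ I'', Y ∪ {x} ∈ E := by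
        intro Y
        constructor
        · intro hY
          simp only [hJ'', Finset.mem_filter] at hY
          exact ⟨((hJ Y).mp hY.1).1, hY.2⟩
        · rintro ⟨hYV, x, hxI'', hxE⟩
          exact Finset.mem_filter.mpr ⟨(hJ Y).mpr ⟨hYV, x, hI''sub hxI'', hxE⟩, x, hxI'', hxE⟩
      obtain ⟨I', J', hI'sub, hI'ne, hJ'sub, hind', hJ'prop, hM, hstrict⟩ :=
        ih I'' hI''lt (hI''sub.trans hIV) hI''ne
          (fun e he u hu v hv huI vI => hInd e he u hu v hv (hI''sub huI) (hI''sub vI))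
          J'' hJ''prop (by omega)
      exact ⟨I', J', hI'sub.trans hI''sub, hI'ne,
        hJ'sub.trans (fun Y hY => (Finset.mem_filter.mp hY).1), hind', hJ'prop, hM, hstrict⟩

/-- If `I` is a nonempty independent set with `|I| ≥ |J| + 1` where
`J = {Y ⊆ V : Y ∪ {x} ∈ E for some x ∈ I}`, then there is a strict HS crown
decomposition `(I', J')` with `∅ ≠ I' ⊆ I` and `J' ⊆ J`. -/
theorem stmt_2 {α : Type*} [DecidableEq α]
    (V : Finset α) (E : Finset (Finset α))
    (hEV : ∀ e ∈ E, e ⊆ V) (hE2 : ∀ e ∈ E, 2 ≤ e.card)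
    (I : Finset α) (hIV : I ⊆ V) (hIne : I.Nonempty)
    (hInd : ∀ e ∈ E, ∀ u ∈ e, ∀ v ∈ e, u ∈ I → v ∈ I → u = v)
    (J : Finset (Finset α))
    (hJ : ∀ Y : Finset α, Y ∈ J ↔ Y ⊆ V ∧ ∃ x ∈ I, Y ∪ {x} ∈ E)
    (hcard : J.card + 1 ≤ I.card) :
    ∃ (I' : Finset α) (J' : Finset (Finset α)),
      I' ⊆ I ∧ I'.Nonempty ∧ J' ⊆ J ∧
      (∀ e ∈ E, ∀ u ∈ e, ∀ v ∈ e, u ∈ I' → v ∈ I' → u = v) ∧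
      (∀ Y : Finset α, Y ∈ J' ↔ Y ⊆ V ∧ ∃ x ∈ I', Y ∪ {x} ∈ E) ∧
      (∃ M : Finset α → α, Set.InjOn M ↑J' ∧ ∀ Y ∈ J', M Y ∈ I' ∧ {M Y} ∪ Y ∈ E) ∧
      J'.card + 1 ≤ I'.card :=
  crown_aux I.card V E hEV hE2 I le_rfl hIV hIne hInd J hJ hcard
end

section
/- Let H = (V, E) be a hypergraph and let x ≠ y be two vertices such that every hyperedge containing x also contains y. Then for every integer k ≥ 0, H has a hitting set of size at most k if and only if the hypergraph obtained from H by deleting x from the vertex set and from every hyperedge (i.e., with vertex set V \ {x} and hyperedge set {e \ {x} : e ∈ E}) has a hitting set of size at most k. -/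
/-- If every hyperedge containing `x` also contains `y` (with `x ≠ y`),
then deleting `x` from the vertex set and from every hyperedge preserves having a
hitting set of size at most `k`. -/
theorem stmt_3 {α : Type*} [DecidableEq α]
    (V : Finset α) (E : Finset (Finset α))
    (hEV : ∀ e ∈ E, e ⊆ V) (hEne : ∀ e ∈ E, e.Nonempty)
    (x y : α) (hxV : x ∈ V) (hyV : y ∈ V) (hxy : x ≠ y)
    (hdom : ∀ e ∈ E, x ∈ e → y ∈ e)
    (k : ℕ) :
    (∃ S : Finset α, S ⊆ V ∧ S.card ≤ k ∧ ∀ e ∈ E, (S ∩ e).Nonempty) ↔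
    (∃ S : Finset α, S ⊆ V.erase x ∧ S.card ≤ k ∧
        ∀ e ∈ E.image (fun e => e.erase x), (S ∩ e).Nonempty) := by
  constructor
  · rintro ⟨S, hSV, hScard, hhit⟩
    refine ⟨if x ∈ S then insert y (S.erase x) else S, ?_, ?_, ?_⟩
    · intro z hz
      split_ifs at hz with hxS
      · rcases Finset.mem_insert.mp hz with rfl | hz
        · exact Finset.mem_erase.mpr ⟨(Ne.symm hxy), hyV⟩
        · rcases Finset.mem_erase.mp hz with ⟨hzx, hzS⟩
          exact Finset.mem_erase.mpr ⟨hzx, hSV hzS⟩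
      · refine Finset.mem_erase.mpr ⟨fun h => hxS (h ▸ hz), hSV hz⟩
    · split_ifs with hxS
      · calc (insert y (S.erase x)).card ≤ (S.erase x).card + 1 :=
              Finset.card_insert_le _ _
          _ = S.card := by
              rw [Finset.card_erase_of_mem hxS]
              exact Nat.succ_pred_eq_of_pos (Finset.card_pos.mpr ⟨x, hxS⟩)
          _ ≤ k := hScard
      · exact hScard
    · intro e' he'
      rcases Finset.mem_image.mp he' with ⟨e, heE, rfl⟩
      obtain ⟨z, hz⟩ := hhit e heE
      rcases Finset.mem_inter.mp hz with ⟨hzS, hze⟩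
      by_cases hzx : z = x
      · subst hzx
        have hye := hdom e heE hze
        refine ⟨y, Finset.mem_inter.mpr ⟨?_, Finset.mem_erase.mpr ⟨Ne.symm hxy, hye⟩⟩⟩
        simp [hzS]
      · refine ⟨z, Finset.mem_inter.mpr ⟨?_, Finset.mem_erase.mpr ⟨hzx, hze⟩⟩⟩
        split_ifs with hxS
        · exact Finset.mem_insert.mpr (Or.inr (Finset.mem_erase.mpr ⟨hzx, hzS⟩))
        · exact hzS
  · rintro ⟨S, hSV, hScard, hhit⟩
    refine ⟨S, fun z hz => Finset.mem_of_mem_erase (hSV hz), hScard, ?_⟩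
    intro e heE
    obtain ⟨z, hz⟩ := hhit (e.erase x) (Finset.mem_image_of_mem _ heE)
    rcases Finset.mem_inter.mp hz with ⟨hzS, hze⟩
    exact ⟨z, Finset.mem_inter.mpr ⟨hzS, Finset.mem_of_mem_erase hze⟩⟩
end

section
/- Let H = (V, E) be a hypergraph, let e ⊆ V be a nonempty set, and suppose there is a family F ⊆ E of more than k hyperedges such that every member of F contains e and any two distinct members f, f' of F satisfy f ∩ f' = e. Let E(e) denote the set of hyperedges of H that contain e. Then H has a hitting set of size at most k if and only if the hypergraph H' = (V, (E \ E(e)) ∪ {e}), obtained by deleting all hyperedges containing e and adding e itself as a hyperedge, has a hitting set of size at most k. -/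
/-- If more than `k` hyperedges pairwise intersect exactly in a nonempty
set `e` (and each contains `e`), then `H` has a hitting set of size at most `k` iff the
hypergraph obtained by deleting all hyperedges containing `e` and adding `e` itself as
a hyperedge has a hitting set of size at most `k`. -/
theorem stmt_7 {α : Type*} [DecidableEq α]
    (V : Finset α) (E : Finset (Finset α))
    (hEV : ∀ f ∈ E, f ⊆ V) (hEne : ∀ f ∈ E, f.Nonempty)
    (e : Finset α) (heV : e ⊆ V) (hene : e.Nonempty)
    (k : ℕ)
    (F : Finset (Finset α)) (hFE : F ⊆ E) (hFcard : k < F.card)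
    (hFsup : ∀ f ∈ F, e ⊆ f)
    (hFint : ∀ f ∈ F, ∀ f' ∈ F, f ≠ f' → f ∩ f' = e) :
    (∃ S : Finset α, S ⊆ V ∧ S.card ≤ k ∧ ∀ f ∈ E, (S ∩ f).Nonempty) ↔
    (∃ S : Finset α, S ⊆ V ∧ S.card ≤ k ∧
        ∀ f ∈ E.filter (fun f => ¬ e ⊆ f) ∪ {e}, (S ∩ f).Nonempty) := by
  constructor
  · rintro ⟨S, hSV, hSk, hS⟩
    refine ⟨S, hSV, hSk, ?_⟩
    have hSe : (S ∩ e).Nonempty := by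
      by_contra h
      rw [Finset.not_nonempty_iff_eq_empty] at h
      set g : Finset α → α := fun f =>
        if hf : (S ∩ f).Nonempty then hf.choose else hene.choose with hg
      have hgmem : ∀ f ∈ F, g f ∈ S ∩ f := by
        intro f hf
        have hne : (S ∩ f).Nonempty := hS f (hFE hf)
        simp only [hg, dif_pos hne]
        exact hne.choose_spec
      have hle : F.card ≤ S.card := by
        apply Finset.card_le_card_of_injOn g
        · intro f hf
          exact (Finset.mem_inter.mp (hgmem f hf)).1
        · intro f hf f' hf' heq
          by_contra hne
          have h1 := hgmem f hf
          have h2 := hgmem f' hf'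
          have : g f ∈ f ∩ f' := Finset.mem_inter.mpr
            ⟨(Finset.mem_inter.mp h1).2, heq ▸ (Finset.mem_inter.mp h2).2⟩
          rw [hFint f hf f' hf' hne] at this
          have : g f ∈ S ∩ e :=
            Finset.mem_inter.mpr ⟨(Finset.mem_inter.mp h1).1, this⟩
          rw [h] at this
          exact absurd this (Finset.notMem_empty _)
      omega
    intro f hf
    rcases Finset.mem_union.mp hf with hf | hf
    · exact hS f (Finset.mem_filter.mp hf).1
    · rw [Finset.mem_singleton.mp hf]
      exact hSe
  · rintro ⟨S, hSV, hSk, hS⟩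
    refine ⟨S, hSV, hSk, ?_⟩
    intro f hf
    by_cases h : e ⊆ f
    · have := hS e (Finset.mem_union_right _ (Finset.mem_singleton_self e))
      exact this.mono (Finset.inter_subset_inter_left h)
    · exact hS f (Finset.mem_union_left _ (Finset.mem_filter.mpr ⟨hf, h⟩))
end

section
/- Fix integers d ≥ 3 and k ≥ 1, and let H = (V, E) be a hypergraph in which every hyperedge has at most d vertices. Let S be a minimum hitting set of H with |S| ≤ k, and suppose there exists a maximal collection W' ⊆ E of pairwise weakly related hyperedges such that every vertex of V is contained in at most k^{d−2} members of W'. Then there exists a good hyperedge subset W ⊆ E such that: (1) S ⊆ V(W); (2) |W| ≤ k^{d−1}; and (3) every vertex of S is contained in at most k^{d−2} members of W. -/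
/-!
Keep the given maximal collection `W'` and, for every vertex of `S` that no member of `W'`
contains, add a private hyperedge of it, i.e. one meeting `S` in that vertex alone; such an edge
exists because `S` is a minimum hitting set. The result is good and covers `S`. A private edge
contains no other vertex of `S`, so every vertex of `S` lies either in the same members as
before or in exactly one. Since every hyperedge meets `S`, double counting then bounds the size
by `|S| · k^(d-2) ≤ k^(d-1)`.
-/

namespace Hypergraph

variable {α : Type*} [DecidableEq α]

def extendByPrivateEdges (W' : Finset (Finset α)) (S : Finset α) (f : α → Finset α) :
    Finset (Finset α) :=
  W' ∪ (S.filter (· ∉ W'.biUnion id)).image f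

theorem exists_inter_eq_singleton_of_not_hits_erase {E : Finset (Finset α)} {S : Finset α}
    {v : α} (hS : ∀ e ∈ E, (S ∩ e).Nonempty) (h : ¬ ∀ e ∈ E, (S.erase v ∩ e).Nonempty) :
    ∃ e ∈ E, S ∩ e = {v} := by
  push Not at h
  obtain ⟨e, he, hempty⟩ := h
  rw [Finset.erase_inter, Finset.erase_eq_empty_iff] at hempty
  exact ⟨e, he, hempty.resolve_left (hS e he).ne_empty⟩

theorem exists_inter_eq_singleton_of_minimal {V : Finset α} {E : Finset (Finset α)}
    {S : Finset α} (hSV : S ⊆ V) (hS : ∀ e ∈ E, (S ∩ e).Nonempty)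
    (hmin : ∀ S' ⊆ V, (∀ e ∈ E, (S' ∩ e).Nonempty) → S.card ≤ S'.card) {v : α} (hv : v ∈ S) :
    ∃ e ∈ E, S ∩ e = {v} := by
  refine exists_inter_eq_singleton_of_not_hits_erase hS fun hhit => ?_
  have := hmin _ ((S.erase_subset v).trans hSV) hhit
  have := Finset.card_erase_lt_of_mem hv
  omega

theorem card_le_sum_card_filter_mem {W : Finset (Finset α)} {S : Finset α}
    (hS : ∀ e ∈ W, (S ∩ e).Nonempty) : W.card ≤ ∑ v ∈ S, (W.filter (v ∈ ·)).card := by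
  refine (Finset.card_le_card fun e he => ?_).trans Finset.card_biUnion_le
  obtain ⟨v, hv⟩ := hS e he
  rw [Finset.mem_inter] at hv
  exact Finset.mem_biUnion.mpr ⟨v, hv.1, Finset.mem_filter.mpr ⟨he, hv.2⟩⟩

section extendByPrivateEdges

variable {W' : Finset (Finset α)} {S : Finset α} {f : α → Finset α}

theorem extendByPrivateEdges_subset {E : Finset (Finset α)} (hW' : W' ⊆ E)
    (hf : ∀ v ∈ S, f v ∈ E) : extendByPrivateEdges W' S f ⊆ E := by
  refine Finset.union_subset hW' fun e he => ?_
  obtain ⟨v, hv, rfl⟩ := Finset.mem_image.mp he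
  exact hf v (Finset.mem_filter.mp hv).1

theorem subset_biUnion_extendByPrivateEdges (hf : ∀ v ∈ S, v ∈ f v) :
    S ⊆ (extendByPrivateEdges W' S f).biUnion id := by
  intro v hv
  by_cases hcov : v ∈ W'.biUnion id
  · exact Finset.biUnion_subset_biUnion_of_subset_left id Finset.subset_union_left hcov
  · refine Finset.mem_biUnion.mpr ⟨f v, Finset.mem_union_right _ ?_, hf v hv⟩
    exact Finset.mem_image_of_mem f (Finset.mem_filter.mpr ⟨hv, hcov⟩)

theorem card_filter_mem_extendByPrivateEdges_le (hf : ∀ u ∈ S, S ∩ f u = {u}) {v : α}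
    (hv : v ∈ S) :
    ((extendByPrivateEdges W' S f).filter (v ∈ ·)).card ≤ max (W'.filter (v ∈ ·)).card 1 := by
  have eq_of_mem_private {u : α} (hu : u ∈ S) (hvu : v ∈ f u) : v = u := by
    simpa [hf u hu] using Finset.mem_inter.mpr ⟨hv, hvu⟩
  rw [extendByPrivateEdges, Finset.filter_union]
  by_cases hcov : v ∈ W'.biUnion id
  · have hnone : ((S.filter (· ∉ W'.biUnion id)).image f).filter (v ∈ ·) = ∅ := by
      refine Finset.filter_eq_empty_iff.mpr fun e he hve => ?_
      obtain ⟨u, hu, rfl⟩ := Finset.mem_image.mp he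
      rw [Finset.mem_filter] at hu
      exact hu.2 (eq_of_mem_private hu.1 hve ▸ hcov)
    rw [hnone, Finset.union_empty]
    exact le_max_left _ _
  · have hnone : W'.filter (v ∈ ·) = ∅ :=
      Finset.filter_eq_empty_iff.mpr fun e he hve => hcov (Finset.mem_biUnion.mpr ⟨e, he, hve⟩)
    have hone : ((S.filter (· ∉ W'.biUnion id)).image f).filter (v ∈ ·) ⊆ {f v} := by
      intro e he
      obtain ⟨hei, hve⟩ := Finset.mem_filter.mp he
      obtain ⟨u, hu, rfl⟩ := Finset.mem_image.mp hei
      rw [eq_of_mem_private (Finset.mem_filter.mp hu).1 hve, Finset.mem_singleton]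
    rw [hnone, Finset.empty_union]
    exact (Finset.card_le_card hone).trans (le_max_right _ _)

end extendByPrivateEdges

end Hypergraph

open Hypergraph in
theorem stmt_9_general {α : Type*} [DecidableEq α]
    (d k : ℕ) (hd : 3 ≤ d)
    (V : Finset α) (E : Finset (Finset α))
    (S : Finset α) (hSV : S ⊆ V) (hSk : S.card ≤ k)
    (hShit : ∀ e ∈ E, (S ∩ e).Nonempty)
    (hSmin : ∀ S' : Finset α, S' ⊆ V → (∀ e ∈ E, (S' ∩ e).Nonempty) → S.card ≤ S'.card)
    (W' : Finset (Finset α)) (hW'E : W' ⊆ E)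
    (hpair : ∀ e1 ∈ W', ∀ e2 ∈ W', e1 ≠ e2 → (e1 ∩ e2).card ≤ d - 2)
    (hmax : ∀ e ∈ E, e ∉ W' → ∃ e' ∈ W', d - 1 ≤ (e ∩ e').card)
    (hdeg : ∀ v ∈ V, (W'.filter (fun f => v ∈ f)).card ≤ k ^ (d - 2)) :
    ∃ W : Finset (Finset α), W ⊆ E ∧
      (∃ W'' : Finset (Finset α), W'' ⊆ W ∧
        (∀ e1 ∈ W'', ∀ e2 ∈ W'', e1 ≠ e2 → (e1 ∩ e2).card ≤ d - 2) ∧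
        (∀ e ∈ E, e ∉ W'' → ∃ e' ∈ W'', d - 1 ≤ (e ∩ e').card)) ∧
      S ⊆ W.biUnion id ∧
      W.card ≤ k ^ (d - 1) ∧
      (∀ v ∈ S, (W.filter (fun f => v ∈ f)).card ≤ k ^ (d - 2)) := by
  choose! f hfE hfS using fun v (hv : v ∈ S) =>
    exists_inter_eq_singleton_of_minimal hSV hShit hSmin hv
  set W := extendByPrivateEdges W' S f
  have hWE : W ⊆ E := extendByPrivateEdges_subset hW'E hfE
  have hWdeg : ∀ v ∈ S, (W.filter (fun f => v ∈ f)).card ≤ k ^ (d - 2) := fun v hv =>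
    have hk : 1 ≤ k := (Finset.card_pos.mpr ⟨v, hv⟩).trans_le hSk
    (card_filter_mem_extendByPrivateEdges_le hfS hv).trans
      (max_le (hdeg v (hSV hv)) (Nat.one_le_pow _ _ hk))
  refine ⟨W, hWE, ⟨W', Finset.subset_union_left, hpair, hmax⟩,
    subset_biUnion_extendByPrivateEdges fun v hv => ?_, ?_, hWdeg⟩
  · exact (Finset.mem_inter.mp ((hfS v hv).symm ▸ Finset.mem_singleton_self v)).2
  calc W.card ≤ ∑ v ∈ S, (W.filter (v ∈ ·)).card :=
        card_le_sum_card_filter_mem fun e he => hShit e (hWE he)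
    _ ≤ S.card * k ^ (d - 2) := Finset.sum_le_card_nsmul _ _ _ hWdeg
    _ ≤ k * k ^ (d - 2) := Nat.mul_le_mul_right _ hSk
    _ = k ^ (d - 1) := by rw [← pow_succ']; congr 1; omega

/-- For a minimum hitting set `S` of size at most `k`, if there is a
maximal collection of pairwise weakly related hyperedges in which every vertex occurs
at most `k^(d-2)` times, then there is a good hyperedge subset `W` with `S ⊆ V(W)`,
`|W| ≤ k^(d-1)`, and every vertex of `S` in at most `k^(d-2)` members of `W`. -/
theorem stmt_9 {α : Type*} [DecidableEq α]
    (d k : ℕ) (hd : 3 ≤ d) (hk : 1 ≤ k)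
    (V : Finset α) (E : Finset (Finset α))
    (hEV : ∀ e ∈ E, e ⊆ V) (hEne : ∀ e ∈ E, e.Nonempty)
    (hEd : ∀ e ∈ E, e.card ≤ d)
    (S : Finset α) (hSV : S ⊆ V) (hSk : S.card ≤ k)
    (hShit : ∀ e ∈ E, (S ∩ e).Nonempty)
    (hSmin : ∀ S' : Finset α, S' ⊆ V → (∀ e ∈ E, (S' ∩ e).Nonempty) → S.card ≤ S'.card)
    (W' : Finset (Finset α)) (hW'E : W' ⊆ E)
    (hpair : ∀ e1 ∈ W', ∀ e2 ∈ W', e1 ≠ e2 → (e1 ∩ e2).card ≤ d - 2)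
    (hmax : ∀ e ∈ E, e ∉ W' → ∃ e' ∈ W', d - 1 ≤ (e ∩ e').card)
    (hdeg : ∀ v ∈ V, (W'.filter (fun f => v ∈ f)).card ≤ k ^ (d - 2)) :
    ∃ W : Finset (Finset α), W ⊆ E ∧
      (∃ W'' : Finset (Finset α), W'' ⊆ W ∧
        (∀ e1 ∈ W'', ∀ e2 ∈ W'', e1 ≠ e2 → (e1 ∩ e2).card ≤ d - 2) ∧
        (∀ e ∈ E, e ∉ W'' → ∃ e' ∈ W'', d - 1 ≤ (e ∩ e').card)) ∧
      S ⊆ W.biUnion id ∧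
      W.card ≤ k ^ (d - 1) ∧
      (∀ v ∈ S, (W.filter (fun f => v ∈ f)).card ≤ k ^ (d - 2)) :=
  stmt_9_general d k hd V E S hSV hSk hShit hSmin W' hW'E hpair hmax hdeg
end
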